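/- arXiv:1502.05341 — 2 statements merged into one kernel-verified Lean document; each statement's English description precedes it below -/
import Mathlib

section
/- Let A be a right alternative metabelian algebra over a field of characteristic ≠ 2. Then for all x, y ∈ A: ((x·y)·x)·y + (x·(y·y))·x = 0. -/
/-! Right alternativity at `(x, y, y)` gives `(xy)y = x(yy)` once `2` is invertible, and right
alternativity at `(xy, x, y)` becomes the claimed identity once the metabelian law kills the
products `(xy)(xy)` and `(xy)(yx)`. -/

theorem eq_zero_of_add_self_eq_zero_of_two_ne_zero {F M : Type*} [DivisionRing F]
    [AddCommGroup M] [Module F M] (hchar : (2 : F) ≠ 0) {v : M} (hv : v + v = 0) : v = 0 :=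
  (smul_eq_zero.mp (by rwa [two_smul] : (2 : F) • v = 0)).resolve_left hchar

theorem mul_mul_self_eq_of_rightAlternative {F A : Type*} [DivisionRing F]
    [NonUnitalNonAssocRing A] [Module F A] (hchar : (2 : F) ≠ 0)
    (hra : ∀ x y z : A, ((x * y) * z - x * (y * z)) + ((x * z) * y - x * (z * y)) = 0)
    (x y : A) : (x * y) * y = x * (y * y) :=
  sub_eq_zero.mp (eq_zero_of_add_self_eq_zero_of_two_ne_zero hchar (hra x y y))

theorem stmt_9_general {F A : Type*} [Field F] [NonUnitalNonAssocRing A]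
    [Module F A]
    (hchar : (2 : F) ≠ 0)
    (hra : ∀ x y z : A, ((x * y) * z - x * (y * z)) + ((x * z) * y - x * (z * y)) = 0)
    (hme : ∀ x y z t : A, (x * y) * (z * t) = 0)
    (x y : A) : ((x * y) * x) * y + (x * (y * y)) * x = 0 := by
  have h := hra (x * y) x y
  rwa [hme x y x y, hme x y y x, mul_mul_self_eq_of_rightAlternative hchar hra, sub_zero,
    sub_zero] at h

theorem stmt_9 {F A : Type*} [Field F] [NonUnitalNonAssocRing A]
    [Module F A] [SMulCommClass F A A] [IsScalarTower F A A]
    (hchar : (2 : F) ≠ 0)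
    (hra : ∀ x y z : A, ((x * y) * z - x * (y * z)) + ((x * z) * y - x * (z * y)) = 0)
    (hme : ∀ x y z t : A, (x * y) * (z * t) = 0)
    (x y : A) : ((x * y) * x) * y + (x * (y * y)) * x = 0 :=
  stmt_9_general hchar hra hme x y
end

section
/- In the superalgebra A^(ε) (basis {x, a_{i,j}}, |x|=1, |a_{i,j}| = i+j mod 2, multiplication: x·x = (ε/2)a_{0,0}, a_{i,j}·x = a_{i,j+1}, x·a_{i,2j} = (−1)^i(a_{i,2j+1}−a_{i+1,2j}), x·a_{i,2j+1} = ((−1)^i/2)(a_{i,2j+2}−2a_{i+1,2j+1}+a_{i+2,2j}), char F ≠ 2), the double supercommutator satisfies [[a_{i,j}, x]_s, x]_s = a_{i+2,j} for all i, j ≥ 0. -/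
/-- Basis of the algebra `A^(ε)`: `none` is the element `x`,
`some (i,j)` is the element `a_{i,j}`. -/
abbrev AeBasis : Type := Option (ℕ × ℕ)

/-- The underlying space of `A^(ε)`: formal `F`-linear combinations of basis elements. -/
abbrev AeSpace (F : Type*) [Field F] : Type _ := AeBasis →₀ F

/-- Product of two basis elements of `A^(ε)`:
`x·x = (ε/2)·a_{0,0}`, `a_{i,j}·x = a_{i,j+1}`,
`x·a_{i,2j} = (−1)^i (a_{i,2j+1} − a_{i+1,2j})`,
`x·a_{i,2j+1} = ((−1)^i/2)(a_{i,2j+2} − 2a_{i+1,2j+1} + a_{i+2,2j})`,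
and all other products of basis elements are zero. -/
noncomputable def mulB (F : Type*) [Field F] (ε : F) : AeBasis → AeBasis → AeSpace F
  | none, none => (ε / 2) • Finsupp.single (some (0, 0)) 1
  | some (i, j), none => Finsupp.single (some (i, j + 1)) 1
  | none, some (i, j) =>
      if j % 2 = 0 then
        ((-1 : F) ^ i) • (Finsupp.single (some (i, j + 1)) (1 : F)
          - Finsupp.single (some (i + 1, j)) 1)
      else
        (((-1 : F) ^ i) / 2) • (Finsupp.single (some (i, j + 1)) (1 : F)
          - (2 : F) • Finsupp.single (some (i + 1, j)) (1 : F)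
          + Finsupp.single (some (i + 2, j - 1)) 1)
  | some _, some _ => 0

/-- The bilinear multiplication of `A^(ε)`, extending `mulB`. -/
noncomputable def mulA (F : Type*) [Field F] (ε : F) (u v : AeSpace F) : AeSpace F :=
  u.sum fun b cb => v.sum fun b' cb' => (cb * cb') • mulB F ε b b'

/-- The generator `x` of `A^(ε)`. -/
noncomputable def xEl (F : Type*) [Field F] : AeSpace F := Finsupp.single none 1

/-- The generator `a_{i,j}` of `A^(ε)`. -/
noncomputable def aEl (F : Type*) [Field F] (i j : ℕ) : AeSpace F :=
  Finsupp.single (some (i, j)) 1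

/-!
Write `L`, `R` for left and right multiplication by `x` and `s = (-1)^(i+j)`. Since `s² = 1`,
the double supercommutator of `a = a_{i,j}` with `x` expands to `R²a + s(LR - RL)a - L²a`.
Here `R²a = a_{i,j+2}`, while both `L²a` and `s(RL - LR)a` equal `½(a_{i,j+2} - a_{i+2,j})`,
as one checks on the multiplication table separately for `j` even and `j` odd.
-/

section

variable {F : Type*} [Field F] {ε : F}

theorem mulA_single_single (b b' : AeBasis) (c c' : F) :
    mulA F ε (Finsupp.single b c) (Finsupp.single b' c') = (c * c') • mulB F ε b b' := by
  simp [mulA, Finsupp.sum_single_index]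

theorem mulA_add_left (u u' v : AeSpace F) :
    mulA F ε (u + u') v = mulA F ε u v + mulA F ε u' v := by
  refine Finsupp.sum_add_index' (by simp) fun b c c' => ?_
  simp only [add_mul, add_smul, Finsupp.sum_add]

theorem mulA_smul_left (c : F) (u v : AeSpace F) :
    mulA F ε (c • u) v = c • mulA F ε u v := by
  rw [mulA, mulA, Finsupp.sum_smul_index' (by simp), Finsupp.smul_sum]
  simp only [Finsupp.smul_sum, smul_smul, smul_eq_mul, mul_assoc]

theorem mulA_add_right (u v v' : AeSpace F) :
    mulA F ε u (v + v') = mulA F ε u v + mulA F ε u v' := by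
  rw [mulA, mulA, mulA, ← Finsupp.sum_add]
  refine Finsupp.sum_congr fun b _ => Finsupp.sum_add_index' (by simp) fun b' c c' => ?_
  simp only [mul_add, add_smul]

theorem mulA_smul_right (c : F) (u v : AeSpace F) :
    mulA F ε u (c • v) = c • mulA F ε u v := by
  rw [mulA, mulA, Finsupp.smul_sum]
  refine Finsupp.sum_congr fun b _ => ?_
  rw [Finsupp.sum_smul_index' (by simp), Finsupp.smul_sum]
  simp only [smul_smul, smul_eq_mul, mul_left_comm]

theorem mulA_sub_left (u u' v : AeSpace F) :
    mulA F ε (u - u') v = mulA F ε u v - mulA F ε u' v := by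
  rw [eq_sub_iff_add_eq, ← mulA_add_left, sub_add_cancel]

theorem mulA_sub_right (u v v' : AeSpace F) :
    mulA F ε u (v - v') = mulA F ε u v - mulA F ε u v' := by
  rw [eq_sub_iff_add_eq, ← mulA_add_right, sub_add_cancel]

theorem aEl_mul_xEl (i j : ℕ) : mulA F ε (aEl F i j) (xEl F) = aEl F i (j + 1) := by
  rw [aEl, xEl, mulA_single_single, one_mul, one_smul, mulB, aEl]

theorem xEl_mul_aEl_of_even {j : ℕ} (hj : Even j) (i : ℕ) :
    mulA F ε (xEl F) (aEl F i j) = (-1 : F) ^ i • (aEl F i (j + 1) - aEl F (i + 1) j) := by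
  simp [aEl, xEl, mulA_single_single, mulB, Nat.even_iff.mp hj]

theorem xEl_mul_aEl_add_one_of_even {j : ℕ} (hj : Even j) (i : ℕ) :
    mulA F ε (xEl F) (aEl F i (j + 1)) =
      ((-1 : F) ^ i / 2) •
        (aEl F i (j + 2) - (2 : F) • aEl F (i + 1) (j + 1) + aEl F (i + 2) j) := by
  simp [aEl, xEl, mulA_single_single, mulB, Nat.add_mod, Nat.even_iff.mp hj]

theorem xEl_mul_xEl_mul_aEl (h2 : (2 : F) ≠ 0) (i j : ℕ) :
    mulA F ε (xEl F) (mulA F ε (xEl F) (aEl F i j)) =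
      (2⁻¹ : F) • (aEl F i (j + 2) - aEl F (i + 2) j) := by
  rcases Nat.even_or_odd j with hj | ⟨m, rfl⟩
  · simp only [xEl_mul_aEl_of_even hj, mulA_smul_right, mulA_sub_right,
      xEl_mul_aEl_add_one_of_even hj]
    rcases neg_one_pow_eq_or F i with h | h <;> simp only [pow_succ, h] <;> match_scalars <;>
      field_simp <;> ring
  · have hm : Even (2 * m) := even_two_mul m
    simp only [xEl_mul_aEl_add_one_of_even hm, mulA_add_right, mulA_sub_right, mulA_smul_right,
      xEl_mul_aEl_of_even hm, xEl_mul_aEl_of_even (hm.add even_two), add_assoc, Nat.reduceAdd]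
    rcases neg_one_pow_eq_or F i with h | h <;> simp only [pow_succ, h] <;> match_scalars <;>
      field_simp <;> ring

theorem neg_one_pow_smul_associator_xEl_aEl_xEl (h2 : (2 : F) ≠ 0) (i j : ℕ) :
    (-1 : F) ^ (i + j) • (mulA F ε (mulA F ε (xEl F) (aEl F i j)) (xEl F)
        - mulA F ε (xEl F) (mulA F ε (aEl F i j) (xEl F))) =
      (2⁻¹ : F) • (aEl F i (j + 2) - aEl F (i + 2) j) := by
  rcases Nat.even_or_odd j with hj | ⟨m, rfl⟩
  · simp only [xEl_mul_aEl_of_even hj, aEl_mul_xEl, xEl_mul_aEl_add_one_of_even hj,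
      mulA_smul_left, mulA_sub_left, pow_add, hj.neg_one_pow]
    rcases neg_one_pow_eq_or F i with h | h <;> simp only [h] <;> match_scalars <;>
      field_simp <;> ring
  · have hm : Even (2 * m) := even_two_mul m
    simp only [xEl_mul_aEl_add_one_of_even hm, aEl_mul_xEl, xEl_mul_aEl_of_even (hm.add even_two),
      mulA_smul_left, mulA_sub_left, mulA_add_left, add_assoc, Nat.reduceAdd, pow_add, pow_one,
      hm.neg_one_pow]
    rcases neg_one_pow_eq_or F i with h | h <;> simp only [h] <;> match_scalars <;>
      field_simp <;> ring

end

theorem stmt_14_general {F : Type*} [Field F] (hchar : (2 : F) ≠ 0)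
    (ε : F) (i j : ℕ) :
    (let c : AeSpace F := mulA F ε (aEl F i j) (xEl F)
        - ((-1 : F) ^ (i + j)) • mulA F ε (xEl F) (aEl F i j);
     mulA F ε c (xEl F) - ((-1 : F) ^ (i + j + 1)) • mulA F ε (xEl F) c)
      = aEl F (i + 2) j := by
  set s : F := (-1) ^ (i + j)
  have hs : (-1 : F) ^ (i + j + 1) = -s := by rw [pow_succ, mul_neg_one]
  have hss : s * s = 1 := by rw [← mul_pow, neg_one_mul, neg_neg, one_pow]
  have hR : mulA F ε (mulA F ε (aEl F i j) (xEl F)) (xEl F) = aEl F i (j + 2) := by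
    rw [aEl_mul_xEl, aEl_mul_xEl]
  have hLL := xEl_mul_xEl_mul_aEl (ε := ε) hchar i j
  have hA := neg_one_pow_smul_associator_xEl_aEl_xEl (ε := ε) hchar i j
  dsimp only
  simp only [hs, mulA_sub_left, mulA_smul_left, mulA_sub_right, mulA_smul_right]
  linear_combination (norm := skip)
    hR - hA - hLL - hss • mulA F ε (xEl F) (mulA F ε (xEl F) (aEl F i j))
  match_scalars <;> field_simp <;> ring

/-- `[[a_{i,j}, x]ₛ, x]ₛ = a_{i+2,j}`; the inner supercommutator
has parity `i + j + 1 (mod 2)`. -/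
theorem stmt_14 {F : Type*} [Field F] (hchar : (2 : F) ≠ 0)
    (ε : F) (hε : ε = 0 ∨ ε = 1) (i j : ℕ) :
    (let c : AeSpace F := mulA F ε (aEl F i j) (xEl F)
        - ((-1 : F) ^ (i + j)) • mulA F ε (xEl F) (aEl F i j);
     mulA F ε c (xEl F) - ((-1 : F) ^ (i + j + 1)) • mulA F ε (xEl F) c)
      = aEl F (i + 2) j :=
  stmt_14_general hchar ε i j
end
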